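/- Suppose the passwords are partitioned into equivalence sets by a classification map cls : Fin n → Fin m such that any two passwords in the same equivalence set have the same probability and the same hash cost (cls i = cls j implies p i = p j and k i = k j). Then there exists an optimal attacker strategy (π, B) that guesses all passwords of an equivalence set or none of them: for all passwords i, j with cls i = cls j, password i is among the first B guesses of π if and only if password j is (π⁻¹(i) < B ↔ π⁻¹(j) < B). -/
import Mathlib


open Finset

/-- Success probability λ(π,B): sum of probabilities of the first B guesses. -/
noncomputable def lam (n : ℕ) (p : Fin n → ℝ) (π : Equiv.Perm (Fin n)) (B : ℕ) : ℝ :=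
  ∑ t : Fin n, if t.val < B then p (π t) else 0

/-- Attacker utility U(π,B) = v·λ(π,B) − Σ_{t<B} k(π(t))·(1 − λ(π,t)). -/
noncomputable def U (n : ℕ) (p k : Fin n → ℝ) (v : ℝ) (π : Equiv.Perm (Fin n)) (B : ℕ) : ℝ :=
  v * lam n p π B - ∑ t : Fin n, if t.val < B then k (π t) * (1 - lam n p π t.val) else 0

lemma lam_congr (n : ℕ) (p : Fin n → ℝ) (π π' : Equiv.Perm (Fin n)) (B C : ℕ)
    (hC : C ≤ B) (h : ∀ t : Fin n, t.val < B → π t = π' t) :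
    lam n p π C = lam n p π' C := by
  unfold lam
  refine Finset.sum_congr rfl fun t _ => ?_
  by_cases ht : t.val < C
  · simp [ht, h t (lt_of_lt_of_le ht hC)]
  · simp [ht]

lemma U_congr (n : ℕ) (p k : Fin n → ℝ) (v : ℝ) (π π' : Equiv.Perm (Fin n)) (B : ℕ)
    (h : ∀ t : Fin n, t.val < B → π t = π' t) :
    U n p k v π B = U n p k v π' B := by
  unfold U
  rw [lam_congr n p π π' B B le_rfl h]
  congr 1
  refine Finset.sum_congr rfl fun t _ => ?_
  by_cases ht : t.val < B
  · rw [if_pos ht, if_pos ht, h t ht, lam_congr n p π π' B t.val (le_of_lt ht) h]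
  · simp [ht]

lemma lam_succ (n : ℕ) (p : Fin n → ℝ) (π : Equiv.Perm (Fin n)) (u : Fin n) :
    lam n p π (u.val + 1) = lam n p π u.val + p (π u) := by
  unfold lam
  have key : ∀ t : Fin n, (if t.val < u.val + 1 then p (π t) else 0)
      = (if t.val < u.val then p (π t) else 0) + (if t = u then p (π t) else 0) := by
    intro t
    rcases lt_trichotomy t.val u.val with h | h | h
    · have hne : t ≠ u := fun he => by rw [he] at h; omega
      simp [h, Nat.lt_succ_of_lt h, hne]
    · have he : t = u := Fin.ext h
      simp [he]
    · have hne : t ≠ u := fun he => by rw [he] at h; omega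
      have h1 : ¬ t.val < u.val + 1 := by omega
      have h2 : ¬ t.val < u.val := by omega
      simp [h1, h2, hne]
  rw [Finset.sum_congr rfl fun t _ => key t, Finset.sum_add_distrib]
  congr 1
  simp

lemma U_succ (n : ℕ) (p k : Fin n → ℝ) (v : ℝ) (π : Equiv.Perm (Fin n)) (u : Fin n) :
    U n p k v π (u.val + 1) = U n p k v π u.val + v * p (π u)
      - k (π u) * (1 - lam n p π u.val) := by
  unfold U
  rw [lam_succ n p π u]
  have key : ∀ t : Fin n, (if t.val < u.val + 1 then k (π t) * (1 - lam n p π t.val) else 0)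
      = (if t.val < u.val then k (π t) * (1 - lam n p π t.val) else 0)
        + (if t = u then k (π t) * (1 - lam n p π t.val) else 0) := by
    intro t
    rcases lt_trichotomy t.val u.val with h | h | h
    · have hne : t ≠ u := fun he => by rw [he] at h; omega
      simp [h, Nat.lt_succ_of_lt h, hne]
    · have he : t = u := Fin.ext h
      simp [he]
    · have hne : t ≠ u := fun he => by rw [he] at h; omega
      have h1 : ¬ t.val < u.val + 1 := by omega
      have h2 : ¬ t.val < u.val := by omega
      simp [h1, h2, hne]
  rw [Finset.sum_congr rfl fun t _ => key t, Finset.sum_add_distrib]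
  have : (∑ t : Fin n, if t = u then k (π t) * (1 - lam n p π t.val) else 0)
      = k (π u) * (1 - lam n p π u.val) := by simp
  rw [this]
  ring

lemma lam_swap (n : ℕ) (p : Fin n → ℝ) (π : Equiv.Perm (Fin n)) (u w : Fin n)
    (hw : u.val + 1 = w.val) (C : ℕ) (hC : C ≤ u.val ∨ w.val < C) :
    lam n p (π * Equiv.swap u w) C = lam n p π C := by
  unfold lam
  rw [← Equiv.sum_comp (Equiv.swap u w) (fun t : Fin n => if t.val < C then p (π t) else 0)]
  refine Finset.sum_congr rfl fun t _ => ?_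
  simp only [Equiv.Perm.mul_apply]
  by_cases htu : t = u
  · subst htu
    rw [Equiv.swap_apply_left]
    have hiff : (t.val < C) ↔ (w.val < C) := by omega
    by_cases h : t.val < C
    · rw [if_pos (hiff.mp h), if_pos h]
    · rw [if_neg (fun hh => h (hiff.mpr hh)), if_neg h]
  · by_cases htw : t = w
    · subst htw
      rw [Equiv.swap_apply_right]
      have hiff : (t.val < C) ↔ (u.val < C) := by omega
      by_cases h : t.val < C
      · rw [if_pos (hiff.mp h), if_pos h]
      · rw [if_neg (fun hh => h (hiff.mpr hh)), if_neg h]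
    · rw [Equiv.swap_apply_of_ne_of_ne htu htw]

lemma U_swap (n : ℕ) (p k : Fin n → ℝ) (v : ℝ) (π : Equiv.Perm (Fin n)) (u w : Fin n)
    (hw : u.val + 1 = w.val) (B : ℕ) (hxB : w.val < B) :
    U n p k v (π * Equiv.swap u w) B
      = U n p k v π B + k (π u) * p (π w) - k (π w) * p (π u) := by
  set π' := π * Equiv.swap u w with hπ'
  have hlamB : lam n p π' B = lam n p π B := lam_swap n p π u w hw B (Or.inr (by omega))
  have hlamx : lam n p π' u.val = lam n p π u.val := lam_swap n p π u w hw u.val (Or.inl le_rfl)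
  have hlam_other : ∀ t : Fin n, t ≠ u → t ≠ w → lam n p π' t.val = lam n p π t.val := by
    intro t h1 h2
    have e1 : t.val ≠ u.val := fun h => h1 (Fin.ext h)
    have e2 : t.val ≠ w.val := fun h => h2 (Fin.ext h)
    exact lam_swap n p π u w hw t.val (by omega)
  have happ_other : ∀ t : Fin n, t ≠ u → t ≠ w → π' t = π t := by
    intro t h1 h2
    simp only [hπ', Equiv.Perm.mul_apply, Equiv.swap_apply_of_ne_of_ne h1 h2]
  have hπ'u : π' u = π w := by simp [hπ', Equiv.swap_apply_left]
  have hπ'w : π' w = π u := by simp [hπ', Equiv.swap_apply_right]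
  set f : Fin n → ℝ := fun t => if t.val < B then k (π t) * (1 - lam n p π t.val) else 0 with hf
  set f' : Fin n → ℝ := fun t => if t.val < B then k (π' t) * (1 - lam n p π' t.val) else 0 with hf'
  have hsupp : ∀ t ∈ Finset.univ, t ∉ ({u, w} : Finset (Fin n)) → f' t - f t = 0 := by
    intro t _ ht
    simp only [Finset.mem_insert, Finset.mem_singleton, not_or] at ht
    simp only [hf, hf']
    by_cases hb : t.val < B
    · rw [if_pos hb, if_pos hb, happ_other t ht.1 ht.2, hlam_other t ht.1 ht.2]; ring
    · rw [if_neg hb, if_neg hb]; ring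
  have huw : u ≠ w := fun h => by rw [h] at hw; omega
  have hsum : ∑ t : Fin n, (f' t - f t) = (f' u - f u) + (f' w - f w) := by
    rw [← Finset.sum_subset (Finset.subset_univ ({u, w} : Finset (Fin n))) hsupp]
    rw [Finset.sum_pair huw]
  have hlamw' : lam n p π' w.val = lam n p π u.val + p (π w) := by
    rw [← hw, lam_succ n p π' u, hlamx, hπ'u]
  have hlamw : lam n p π w.val = lam n p π u.val + p (π u) := by
    rw [← hw, lam_succ n p π u]
  have hub : u.val < B := by omega
  have val1 : f' u - f u = k (π w) * (1 - lam n p π u.val) - k (π u) * (1 - lam n p π u.val) := by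
    simp only [hf, hf']
    rw [if_pos hub, if_pos hub, hπ'u, hlamx]
  have val2 : f' w - f w = k (π u) * (1 - (lam n p π u.val + p (π w)))
      - k (π w) * (1 - (lam n p π u.val + p (π u))) := by
    simp only [hf, hf']
    rw [if_pos hxB, if_pos hxB, hπ'w, hlamw', hlamw]
  have key : ∑ t : Fin n, f' t - ∑ t : Fin n, f t
      = k (π w) * p (π u) - k (π u) * p (π w) := by
    rw [← Finset.sum_sub_distrib, hsum, val1, val2]; ring
  have hU : U n p k v π B = v * lam n p π B - ∑ t : Fin n, f t := rfl
  have hU' : U n p k v π' B = v * lam n p π' B - ∑ t : Fin n, f' t := rfl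
  rw [hU', hU, hlamB]
  linarith [key]

lemma moveRight (n : ℕ) (p k : Fin n → ℝ) (v : ℝ) (B : ℕ) (hB : B ≤ n) :
    ∀ (d : ℕ) (u : Fin n) (π : Equiv.Perm (Fin n)), u.val + d < B →
    ∃ σ : Equiv.Perm (Fin n),
      (∀ t : Fin n, t.val < u.val → σ t = π t) ∧
      (∀ t : Fin n, u.val + d < t.val → σ t = π t) ∧
      (∀ s : Fin n, s.val = u.val + d → σ s = π u) ∧
      lam n p σ B = lam n p π B ∧
      U n p k v σ B = U n p k v π B +
        ∑ t : Fin n, (if u.val < t.val ∧ t.val ≤ u.val + d then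
          k (π u) * p (π t) - k (π t) * p (π u) else 0) := by
  intro d
  induction d with
  | zero =>
    intro u π hx
    refine ⟨π, fun _ _ => rfl, fun _ _ => rfl, fun s hs => by rw [Fin.ext hs], rfl, ?_⟩
    have hz : ∀ t : Fin n, (if u.val < t.val ∧ t.val ≤ u.val + 0 then
        k (π u) * p (π t) - k (π t) * p (π u) else 0) = 0 := by
      intro t; rw [if_neg]; omega
    rw [Finset.sum_congr rfl fun t _ => hz t]
    simp
  | succ d ih =>
    intro u π hx
    have hwn : u.val + 1 < n := by omega
    set w : Fin n := ⟨u.val + 1, hwn⟩ with hwdef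
    have hwval : u.val + 1 = w.val := rfl
    set π' := π * Equiv.swap u w with hπ'
    obtain ⟨σ, hpre, hpost, hend, hlam, hU⟩ := ih w π' (by simp [hwdef]; omega)
    have hne_of_val : ∀ (t s : Fin n), t.val ≠ s.val → t ≠ s := fun t s h he => h (by rw [he])
    have happ_other : ∀ t : Fin n, t.val ≠ u.val → t.val ≠ w.val → π' t = π t := by
      intro t h1 h2
      simp only [hπ', Equiv.Perm.mul_apply,
        Equiv.swap_apply_of_ne_of_ne (hne_of_val t u h1) (hne_of_val t w h2)]
    have hπ'w : π' w = π u := by simp [hπ', Equiv.swap_apply_right]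
    refine ⟨σ, ?_, ?_, ?_, ?_, ?_⟩
    · intro t ht
      rw [hpre t (by simp [hwdef]; omega), happ_other t (by omega) (by rw [← hwval]; omega)]
    · intro t ht
      rw [hpost t (by simp [hwdef]; omega), happ_other t (by omega) (by rw [← hwval]; omega)]
    · intro s hs
      rw [hend s (by simp [hwdef]; omega), hπ'w]
    · rw [hlam, hπ', lam_swap n p π u w hwval B (Or.inr (by rw [← hwval]; omega))]
    · rw [hU, hπ', U_swap n p k v π u w hwval B (by rw [← hwval]; omega)]
      have hterm : ∀ t : Fin n, (if w.val < t.val ∧ t.val ≤ w.val + d then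
          k (π' w) * p (π' t) - k (π' t) * p (π' w) else 0)
          = (if u.val + 1 < t.val ∧ t.val ≤ u.val + (d + 1) then
          k (π u) * p (π t) - k (π t) * p (π u) else 0) := by
        intro t
        by_cases h : w.val < t.val ∧ t.val ≤ w.val + d
        · rw [if_pos h, if_pos (by omega), hπ'w, happ_other t (by omega) (by omega)]
        · rw [if_neg h, if_neg (by omega)]
      rw [Finset.sum_congr rfl fun t _ => hterm t]
      have hsplit : ∀ t : Fin n, (if u.val < t.val ∧ t.val ≤ u.val + (d + 1) then
          k (π u) * p (π t) - k (π t) * p (π u) else 0)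
          = (if u.val + 1 < t.val ∧ t.val ≤ u.val + (d + 1) then
              k (π u) * p (π t) - k (π t) * p (π u) else 0)
            + (if t = w then k (π u) * p (π t) - k (π t) * p (π u) else 0) := by
        intro t
        by_cases he : t = w
        · subst he
          rw [if_pos (by omega), if_neg (by omega), if_pos rfl]
          ring
        · have hv : t.val ≠ w.val := fun h => he (Fin.ext h)
          by_cases h : u.val < t.val ∧ t.val ≤ u.val + (d + 1)
          · rw [if_pos h, if_pos (by omega), if_neg he]; ring
          · rw [if_neg h, if_neg (by omega), if_neg he]; ring
      rw [Finset.sum_congr rfl fun t _ => hsplit t, Finset.sum_add_distrib]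
      have hlast : (∑ t : Fin n, if t = w then
          k (π u) * p (π t) - k (π t) * p (π u) else 0)
          = k (π u) * p (π w) - k (π w) * p (π u) := by simp
      rw [hlast]
      ring

lemma moveLeft (n : ℕ) (p k : Fin n → ℝ) (v : ℝ) (B : ℕ) (hB : B ≤ n) :
    ∀ (d : ℕ) (u : Fin n) (π : Equiv.Perm (Fin n)), u.val + d < B →
    ∃ (ρ : Equiv.Perm (Fin n)) (y : Fin n), y.val = u.val + d ∧
      (∀ t : Fin n, t.val < u.val → ρ t = π t) ∧
      (∀ t : Fin n, u.val + d < t.val → ρ t = π t) ∧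
      ρ u = π y ∧
      lam n p ρ B = lam n p π B ∧
      U n p k v ρ B = U n p k v π B +
        ∑ t : Fin n, (if u.val ≤ t.val ∧ t.val < u.val + d then
          k (π t) * p (π y) - k (π y) * p (π t) else 0) := by
  intro d
  induction d with
  | zero =>
    intro u π hx
    refine ⟨π, u, by omega, fun _ _ => rfl, fun _ _ => rfl, rfl, rfl, ?_⟩
    have hz : ∀ t : Fin n, (if u.val ≤ t.val ∧ t.val < u.val + 0 then
        k (π t) * p (π u) - k (π u) * p (π t) else 0) = 0 := by
      intro t; rw [if_neg]; omega
    rw [Finset.sum_congr rfl fun t _ => hz t]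
    simp
  | succ d ih =>
    intro u π hx
    have hwn : u.val + 1 < n := by omega
    set w : Fin n := ⟨u.val + 1, hwn⟩ with hwdef
    have hwval : u.val + 1 = w.val := rfl
    obtain ⟨ρ', y, hy, hpre', hpost', happly', hlam', hU'⟩ := ih w π (by simp [hwdef]; omega)
    have hyval : y.val = u.val + (d + 1) := by rw [hy, ← hwval]; omega
    set ρ := ρ' * Equiv.swap u w with hρ
    have hne_of_val : ∀ (t s : Fin n), t.val ≠ s.val → t ≠ s := fun t s h he => h (by rw [he])
    have happ_other : ∀ t : Fin n, t.val ≠ u.val → t.val ≠ w.val → ρ t = ρ' t := by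
      intro t h1 h2
      simp only [hρ, Equiv.Perm.mul_apply,
        Equiv.swap_apply_of_ne_of_ne (hne_of_val t u h1) (hne_of_val t w h2)]
    have hρu : ρ u = ρ' w := by simp [hρ, Equiv.swap_apply_left]
    have hρw : ρ w = ρ' u := by simp [hρ, Equiv.swap_apply_right]
    have hρ'u : ρ' u = π u := hpre' u (by omega)
    refine ⟨ρ, y, hyval, ?_, ?_, ?_, ?_, ?_⟩
    · intro t ht
      rw [happ_other t (by omega) (by rw [← hwval]; omega), hpre' t (by rw [← hwval]; omega)]
    · intro t ht
      rw [happ_other t (by omega) (by rw [← hwval]; omega), hpost' t (by rw [← hwval]; omega)]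
    · rw [hρu, happly']
    · rw [hρ, lam_swap n p ρ' u w hwval B (Or.inr (by rw [← hwval]; omega)), hlam']
    · rw [hρ, U_swap n p k v ρ' u w hwval B (by rw [← hwval]; omega), hU', hρ'u]
      have hρ'w : ρ' w = π y := happly'
      rw [hρ'w]
      have hterm : ∀ t : Fin n, (if w.val ≤ t.val ∧ t.val < w.val + d then
          k (π t) * p (π y) - k (π y) * p (π t) else 0)
          = (if u.val + 1 ≤ t.val ∧ t.val < u.val + (d + 1) then
          k (π t) * p (π y) - k (π y) * p (π t) else 0) := by
        intro t
        by_cases h : w.val ≤ t.val ∧ t.val < w.val + d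
        · rw [if_pos h, if_pos (by omega)]
        · rw [if_neg h, if_neg (by omega)]
      rw [Finset.sum_congr rfl fun t _ => hterm t]
      have hsplit : ∀ t : Fin n, (if u.val ≤ t.val ∧ t.val < u.val + (d + 1) then
          k (π t) * p (π y) - k (π y) * p (π t) else 0)
          = (if u.val + 1 ≤ t.val ∧ t.val < u.val + (d + 1) then
              k (π t) * p (π y) - k (π y) * p (π t) else 0)
            + (if t = u then k (π t) * p (π y) - k (π y) * p (π t) else 0) := by
        intro t
        by_cases he : t = u
        · subst he
          rw [if_pos (by omega), if_neg (by omega), if_pos rfl]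
          ring
        · have hv : t.val ≠ u.val := fun h => he (Fin.ext h)
          by_cases h : u.val ≤ t.val ∧ t.val < u.val + (d + 1)
          · rw [if_pos h, if_pos (by omega), if_neg he]; ring
          · rw [if_neg h, if_neg (by omega), if_neg he]; ring
      rw [Finset.sum_congr rfl fun t _ => hsplit t, Finset.sum_add_distrib]
      have hlast : (∑ t : Fin n, if t = u then
          k (π t) * p (π y) - k (π y) * p (π t) else 0)
          = k (π u) * p (π y) - k (π y) * p (π u) := by simp
      rw [hlast]
      ring

lemma core (n : ℕ) (p k : Fin n → ℝ) (v : ℝ) (hp : ∀ i, 0 ≤ p i) (hk : ∀ i, 0 < k i)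
    (π : Equiv.Perm (Fin n)) (B : ℕ) (hB : B ≤ n)
    (hopt : ∀ (π' : Equiv.Perm (Fin n)) (B' : ℕ), B' ≤ n → U n p k v π' B' ≤ U n p k v π B)
    (hmaxB : ∀ (π' : Equiv.Perm (Fin n)) (B' : ℕ), B' ≤ n →
      U n p k v π' B' = U n p k v π B → B' ≤ B)
    (i j : Fin n) (hpij : p i = p j) (hkij : k i = k j)
    (hi : (π.symm i).val < B) : (π.symm j).val < B := by
  by_contra hj
  set a : Fin n := π.symm i with ha
  set b : Fin n := π.symm j with hb
  have hπa : π a = i := π.apply_symm_apply i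
  have hπb : π b = j := π.apply_symm_apply j
  have hbB : B ≤ b.val := not_lt.mp hj
  have hBn : B < n := lt_of_le_of_lt hbB b.isLt
  -- Step 1: move i (at position a) to position B-1, then drop it.
  obtain ⟨σ, _, _, hend, hlamσ, hUσ⟩ :=
    moveRight n p k v B hB (B - 1 - a.val) a π (by omega)
  set e : Fin n := ⟨B - 1, by omega⟩ with he
  have heval : e.val = a.val + (B - 1 - a.val) := by simp [he]; omega
  have hσe : σ e = i := by rw [hend e heval, hπa]
  set S : ℝ := ∑ t : Fin n, (if a.val < t.val ∧ t.val ≤ a.val + (B - 1 - a.val) then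
      k (π a) * p (π t) - k (π t) * p (π a) else 0) with hS
  have E1 : U n p k v σ B = U n p k v π B + S := hUσ
  have hB1 : e.val + 1 = B := by simp [he]; omega
  have heB1 : e.val = B - 1 := rfl
  have E2 : U n p k v σ B = U n p k v σ (B - 1) + v * p i
      - k i * (1 - lam n p σ (B - 1)) := by
    have h := U_succ n p k v σ e
    rw [hσe, heB1, hB1] at h
    exact h
  have E4 : lam n p σ B = lam n p σ (B - 1) + p i := by
    have h := lam_succ n p σ e
    rw [hσe, heB1, hB1] at h
    exact h
  have hlamB1 : lam n p σ (B - 1) = lam n p π B - p i := by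
    rw [← hlamσ]; linarith [E4]
  have I1 : U n p k v σ (B - 1) ≤ U n p k v π B := hopt σ (B - 1) (by omega)
  -- Step 2: bring j to position B, then insert it at position a+1, budget B+1.
  set g : Fin n := ⟨B, hBn⟩ with hg
  have hgval : g.val = B := rfl
  set π₁ := π * Equiv.swap g b with hπ₁
  have hpre₁ : ∀ t : Fin n, t.val < B → π₁ t = π t := by
    intro t ht
    have h1 : t ≠ g := fun hh => by rw [hh, hgval] at ht; omega
    have h2 : t ≠ b := fun hh => by rw [hh] at ht; omega
    simp only [hπ₁, Equiv.Perm.mul_apply, Equiv.swap_apply_of_ne_of_ne h1 h2]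
  have hπ₁g : π₁ g = j := by
    simp only [hπ₁, Equiv.Perm.mul_apply, Equiv.swap_apply_left]
    exact hπb
  have hUπ₁ : U n p k v π₁ B = U n p k v π B := U_congr n p k v π₁ π B hpre₁
  have hlamπ₁ : lam n p π₁ B = lam n p π B := lam_congr n p π₁ π B B le_rfl hpre₁
  have E5a : U n p k v π₁ (B + 1) = U n p k v π B + v * p j - k j * (1 - lam n p π B) := by
    have h := U_succ n p k v π₁ g
    rw [hπ₁g, hgval, hUπ₁, hlamπ₁] at h
    exact h
  set w0 : Fin n := ⟨a.val + 1, by omega⟩ with hw0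
  have hw0v : w0.val = a.val + 1 := rfl
  obtain ⟨ρ, y, hy, _, _, _, _, hUρ⟩ :=
    moveLeft n p k v (B + 1) (by omega) (B - (a.val + 1)) w0 π₁ (by rw [hw0v]; omega)
  have hyval : y.val = B := by rw [hy, hw0v]; omega
  have hyg : y = g := Fin.ext (by rw [hyval, hgval])
  set T : ℝ := ∑ t : Fin n, (if w0.val ≤ t.val ∧ t.val < w0.val + (B - (a.val + 1)) then
      k (π₁ t) * p (π₁ y) - k (π₁ y) * p (π₁ t) else 0) with hT
  have E5 : U n p k v ρ (B + 1) = U n p k v π B + v * p j - k j * (1 - lam n p π B) + T := by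
    rw [hUρ, E5a]
  have E6 : T + S = 0 := by
    rw [hT, hS, ← Finset.sum_add_distrib]
    apply Finset.sum_eq_zero
    intro t _
    by_cases h : a.val < t.val ∧ t.val ≤ a.val + (B - 1 - a.val)
    · rw [if_pos (by rw [hw0v]; omega), if_pos h]
      have htB : t.val < B := by omega
      rw [hpre₁ t htB, hyg, hπ₁g, hπa, hpij, hkij]
      ring
    · rw [if_neg (by rw [hw0v]; omega), if_neg h]
      ring
  have hle : U n p k v ρ (B + 1) ≤ U n p k v π B := hopt ρ (B + 1) (by omega)
  have hne : U n p k v ρ (B + 1) ≠ U n p k v π B := by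
    intro heq
    have := hmaxB ρ (B + 1) (by omega) heq
    omega
  have I2 : U n p k v ρ (B + 1) < U n p k v π B := lt_of_le_of_ne hle hne
  have E7 : k i * (1 - lam n p σ (B - 1)) = k i * (1 - lam n p π B) + k i * p i := by
    rw [hlamB1]; ring
  have hvp : v * p j = v * p i := by rw [hpij]
  have hkt : k j * (1 - lam n p π B) = k i * (1 - lam n p π B) := by rw [hkij]
  have hnn : 0 ≤ k i * p i := mul_nonneg (hk i).le (hp i)
  linarith [E1, E2, E5, E6, E7, I1, I2, hvp, hkt, hnn]

theorem stmt_10 (n m : ℕ) (p k : Fin n → ℝ) (v : ℝ)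
    (hp : ∀ i, 0 ≤ p i) (hpsum : ∑ i, p i ≤ 1) (hk : ∀ i, 0 < k i) (hv : 0 ≤ v)
    (cls : Fin n → Fin m)
    (hcls : ∀ i j, cls i = cls j → p i = p j ∧ k i = k j) :
    ∃ (π : Equiv.Perm (Fin n)) (B : ℕ), B ≤ n ∧
      (∀ (π' : Equiv.Perm (Fin n)) (B' : ℕ), B' ≤ n →
        U n p k v π B ≥ U n p k v π' B') ∧
      (∀ i j : Fin n, cls i = cls j → ((π.symm i).val < B ↔ (π.symm j).val < B)) := by
  classical
  set F : Equiv.Perm (Fin n) × Fin (n + 1) → ℝ := fun q => U n p k v q.1 q.2.val with hF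
  obtain ⟨q0, hq0⟩ := Finite.exists_max F
  set T : Finset (Equiv.Perm (Fin n) × Fin (n + 1)) :=
    Finset.univ.filter (fun q => ∀ q', F q' ≤ F q) with hTdef
  have hT : T.Nonempty := by
    refine ⟨q0, ?_⟩
    simp only [hTdef, Finset.mem_filter, Finset.mem_univ, true_and]
    exact hq0
  obtain ⟨q, hqT, hqmax⟩ := T.exists_max_image (fun q => q.2.val) hT
  have hqopt : ∀ q', F q' ≤ F q := by
    simp only [hTdef, Finset.mem_filter, Finset.mem_univ, true_and] at hqT
    exact hqT
  set π := q.1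
  set B := q.2.val with hBdef
  have hBn : B ≤ n := by omega
  have hopt : ∀ (π' : Equiv.Perm (Fin n)) (B' : ℕ), B' ≤ n →
      U n p k v π' B' ≤ U n p k v π B := by
    intro π' B' hB'
    exact hqopt (π', ⟨B', by omega⟩)
  have hmaxB : ∀ (π' : Equiv.Perm (Fin n)) (B' : ℕ), B' ≤ n →
      U n p k v π' B' = U n p k v π B → B' ≤ B := by
    intro π' B' hB' heq
    have hmem : (π', (⟨B', by omega⟩ : Fin (n + 1))) ∈ T := by
      simp only [hTdef, Finset.mem_filter, Finset.mem_univ, true_and]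
      intro q'
      calc F q' ≤ F q := hqopt q'
        _ = U n p k v π' B' := heq.symm
    exact hqmax _ hmem
  refine ⟨π, B, hBn, fun π' B' hB' => hopt π' B' hB', fun i j hc => ?_⟩
  obtain ⟨hpij, hkij⟩ := hcls i j hc
  exact ⟨fun h => core n p k v hp hk π B hBn hopt hmaxB i j hpij hkij h,
    fun h => core n p k v hp hk π B hBn hopt hmaxB j i hpij.symm hkij.symm h⟩
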